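/- Let f : ℝ^d → ℝ be C¹-smooth with ρ-Lipschitz gradient, r : ℝ^d → ℝ ∪ {+∞} proper closed convex, and set φ = f + r. Let (Ω, F, P) be a probability space and G : ℝ^d × Ω → ℝ^d measurable with ∫ G(x,ξ) dP(ξ) = ∇f(x) and ∫ ‖G(x,ξ) − ∇f(x)‖² dP(ξ) ≤ σ², for all x ∈ dom r. Fix ρ̄ > ρ, α ∈ (0, 1/ρ̄], x ∈ dom r, and set x̂ = prox_{φ/ρ̄}(x); suppose ρ̄(x − x̂) − ∇f(x̂) ∈ ∂r(x̂). Then the proximal stochastic gradient step x⁺(ξ) = prox_{αr}(x − αG(x,ξ)) satisfies ∫_Ω ‖x⁺(ξ) − x̂‖² dP(ξ) ≤ ‖x − x̂‖² + α²σ² − α(ρ̄ − ρ)‖x − x̂‖². -/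

import Mathlib

open MeasureTheory RealInnerProductSpace

/-!
The point `x̂` is itself a proximal point: `v = ρ̄(x − x̂) − ∇f(x̂) ∈ ∂r(x̂)` says
`x̂ = prox_{αr}(x̂ + αv)`, while `x⁺(ξ) = prox_{αr}(x − αG(x,ξ))`. Since `prox_{αr}` is
nonexpansive, `‖x⁺(ξ) − x̂‖ ≤ ‖c − α(G(x,ξ) − ∇f(x))‖` with
`c = (1 − αρ̄)(x − x̂) − α(∇f(x) − ∇f(x̂))`. The noise is centred, so the expected square is at
most `‖c‖² + α²σ²`, and the Lipschitz gradient gives `‖c‖ ≤ κ‖x − x̂‖` with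
`κ = 1 − α(ρ̄ − ρ) ∈ [0, 1]`, hence `‖c‖² ≤ κ‖x − x̂‖²`.
-/

/-- Convexity for extended-real-valued functions `g : E → ℝ ∪ {+∞}` on a set `s`. -/
def ERealConvexOn {E : Type*} [AddCommMonoid E] [SMul ℝ E]
    (s : Set E) (g : E → EReal) : Prop :=
  ∀ x ∈ s, ∀ y ∈ s, ∀ a b : ℝ, 0 ≤ a → 0 ≤ b → a + b = 1 →
    g (a • x + b • y) ≤ (a : EReal) * g x + (b : EReal) * g y

theorem nonneg_of_forall_add_mul_nonneg {A B : ℝ}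
    (h : ∀ t : ℝ, 0 < t → t ≤ 1 → 0 ≤ A + t * B) : 0 ≤ A := by
  have hlim : Filter.Tendsto (fun t : ℝ => A + t * B) (nhdsWithin 0 (Set.Ioi 0)) (nhds A) := by
    have : Continuous (fun t : ℝ => A + t * B) := by fun_prop
    simpa using (this.tendsto 0).mono_left nhdsWithin_le_nhds
  refine ge_of_tendsto hlim ?_
  filter_upwards [Ioc_mem_nhdsGT one_pos] with t ht using h t ht.1 ht.2

section Subgradient

variable {E : Type*} [NormedAddCommGroup E] [InnerProductSpace ℝ E] {r : E → EReal}

/-- `g ∈ ∂r(u)` for an extended-real-valued `r`. -/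
def HasSubgradientAt (r : E → EReal) (g u : E) : Prop :=
  ∀ y, r u + ((⟪g, y - u⟫ : ℝ) : EReal) ≤ r y

theorem HasSubgradientAt.ne_top {g u y : E} (h : HasSubgradientAt r g u) (hy : r y ≠ ⊤) :
    r u ≠ ⊤ := by
  intro hu
  have := h y
  rw [hu, EReal.top_add_coe, top_le_iff] at this
  exact hy this

theorem HasSubgradientAt.toReal_add_inner_le {g u y : E} (h : HasSubgradientAt r g u)
    (hbot : ∀ y, r y ≠ ⊥) (hy : r y ≠ ⊤) :
    (r u).toReal + ⟪g, y - u⟫ ≤ (r y).toReal := by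
  have hu := h y
  rw [← EReal.coe_toReal (h.ne_top hy) (hbot u), ← EReal.coe_toReal hy (hbot y),
    ← EReal.coe_add, EReal.coe_le_coe_iff] at hu
  exact hu

theorem HasSubgradientAt.inner_sub_nonneg {g₁ g₂ u₁ u₂ : E} (h₁ : HasSubgradientAt r g₁ u₁)
    (h₂ : HasSubgradientAt r g₂ u₂) (hbot : ∀ y, r y ≠ ⊥) (hu₁ : r u₁ ≠ ⊤) :
    0 ≤ ⟪g₁ - g₂, u₁ - u₂⟫ := by
  have hu₂ : r u₂ ≠ ⊤ := h₂.ne_top hu₁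
  have e₁ := h₁.toReal_add_inner_le hbot hu₂
  have e₂ := h₂.toReal_add_inner_le hbot hu₁
  have : ⟪g₁, u₂ - u₁⟫ = -⟪g₁, u₁ - u₂⟫ := by rw [← inner_neg_right, neg_sub]
  rw [inner_sub_left]
  linarith

/-- The resolvent `(I + a ∂r)⁻¹` is nonexpansive. -/
theorem HasSubgradientAt.norm_sub_le {g₁ g₂ u₁ u₂ : E} (h₁ : HasSubgradientAt r g₁ u₁)
    (h₂ : HasSubgradientAt r g₂ u₂) (hbot : ∀ y, r y ≠ ⊥) (hu₁ : r u₁ ≠ ⊤) {a : ℝ} (ha : 0 ≤ a) :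
    ‖u₁ - u₂‖ ≤ ‖(u₁ + a • g₁) - (u₂ + a • g₂)‖ := by
  have hmono := h₁.inner_sub_nonneg h₂ hbot hu₁
  have hexp : (u₁ + a • g₁) - (u₂ + a • g₂) = (u₁ - u₂) + a • (g₁ - g₂) := by module
  rw [← pow_le_pow_iff_left₀ (norm_nonneg _) (norm_nonneg _) two_ne_zero, hexp,
    norm_add_sq_real, inner_smul_right, real_inner_comm, norm_smul, mul_pow]
  nlinarith [sq_nonneg ‖a‖, sq_nonneg ‖g₁ - g₂‖]

theorem ERealConvexOn.apply_sub_smul_add_smul_le (hr : ERealConvexOn Set.univ r) {u y : E}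
    {ru ry : ℝ} (hu : r u = ru) (hy : r y = ry) {t : ℝ} (ht0 : 0 ≤ t) (ht1 : t ≤ 1) :
    r ((1 - t) • u + t • y) ≤ (((1 - t) * ru + t * ry : ℝ) : EReal) := by
  have := hr u trivial y trivial (1 - t) t (by linarith) ht0 (by ring)
  rwa [hu, hy, ← EReal.coe_mul, ← EReal.coe_mul, ← EReal.coe_add] at this

/-- The optimality condition of `u = prox_{a r}(z)`: `(z - u) / a ∈ ∂r(u)`. -/
theorem ERealConvexOn.hasSubgradientAt_of_isProx (hr : ERealConvexOn Set.univ r)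
    (hbot : ∀ y, r y ≠ ⊥) {a : ℝ} (ha : 0 < a) {u z : E}
    (hmin : ∀ y, r u + ((1 / (2 * a) * ‖u - z‖ ^ 2 : ℝ) : EReal)
      ≤ r y + ((1 / (2 * a) * ‖y - z‖ ^ 2 : ℝ) : EReal)) :
    HasSubgradientAt r (a⁻¹ • (z - u)) u := by
  intro y
  by_cases hy : r y = ⊤
  · simp [hy]
  have hu : r u ≠ ⊤ := by
    intro hu
    have := hmin y
    rw [hu, EReal.top_add_coe, top_le_iff, ← EReal.coe_toReal hy (hbot y), ← EReal.coe_add] at this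
    exact EReal.coe_ne_top _ this
  set ru := (r u).toReal
  set ry := (r y).toReal
  have hru : r u = ru := (EReal.coe_toReal hu (hbot u)).symm
  have hry : r y = ry := (EReal.coe_toReal hy (hbot y)).symm
  rw [hru, hry, ← EReal.coe_add, EReal.coe_le_coe_iff, real_inner_smul_left]
  suffices 0 ≤ (ry - ru - a⁻¹ * ⟪z - u, y - u⟫) by linarith
  refine nonneg_of_forall_add_mul_nonneg (B := ‖y - u‖ ^ 2 / (2 * a)) fun t ht0 ht1 => ?_
  have hstep := (hmin ((1 - t) • u + t • y)).trans
    (add_le_add_left (hr.apply_sub_smul_add_smul_le hru hry ht0.le ht1) _)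
  rw [hru, ← EReal.coe_add, ← EReal.coe_add, EReal.coe_le_coe_iff] at hstep
  have hsegment : (1 - t) • u + t • y - z = (u - z) + t • (y - u) := by module
  rw [hsegment, norm_add_sq_real, real_inner_smul_right, norm_smul, mul_pow, Real.norm_eq_abs,
    sq_abs, ← neg_sub z u, inner_neg_left] at hstep
  refine nonneg_of_mul_nonneg_right ?_ ht0
  have : t * (ry - ru - a⁻¹ * ⟪z - u, y - u⟫ + t * (‖y - u‖ ^ 2 / (2 * a)))
      = (1 - t) * ru + t * ry + 1 / (2 * a) * (‖u - z‖ ^ 2 + 2 * (t * -⟪z - u, y - u⟫)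
        + t ^ 2 * ‖y - u‖ ^ 2) - (ru + 1 / (2 * a) * ‖u - z‖ ^ 2) := by
    field_simp
    ring
  linarith

end Subgradient

section Expectation

variable {Ω E : Type*} [MeasurableSpace Ω] {P : Measure Ω} [NormedAddCommGroup E]

theorem memLp_two_of_lintegral_norm_sq_le {D : Ω → E} (hD : AEStronglyMeasurable D P) {b : ℝ}
    (h : ∫⁻ ξ, ENNReal.ofReal (‖D ξ‖ ^ 2) ∂P ≤ ENNReal.ofReal b) : MemLp D 2 P := by
  rw [memLp_two_iff_integrable_sq_norm hD]
  refine ⟨hD.norm.pow 2, ?_⟩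
  rw [hasFiniteIntegral_iff_ofReal (ae_of_all _ fun _ => sq_nonneg _)]
  exact h.trans_lt ENNReal.ofReal_lt_top

theorem integral_norm_sq_le_of_lintegral_le {D : Ω → E} (hD : AEStronglyMeasurable D P) {b : ℝ}
    (hb : 0 ≤ b) (h : ∫⁻ ξ, ENNReal.ofReal (‖D ξ‖ ^ 2) ∂P ≤ ENNReal.ofReal b) :
    ∫ ξ, ‖D ξ‖ ^ 2 ∂P ≤ b := by
  rw [integral_eq_lintegral_of_nonneg_ae (ae_of_all _ fun _ => sq_nonneg _) (hD.norm.pow 2),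
    ← ENNReal.toReal_ofReal hb]
  exact ENNReal.toReal_mono ENNReal.ofReal_ne_top h

variable [InnerProductSpace ℝ E]

theorem norm_sub_smul_sq_real (c d : E) (a : ℝ) :
    ‖c - a • d‖ ^ 2 = ‖c‖ ^ 2 - 2 * a * ⟪c, d⟫ + a ^ 2 * ‖d‖ ^ 2 := by
  rw [norm_sub_sq_real, real_inner_smul_right, norm_smul, mul_pow, Real.norm_eq_abs, sq_abs]
  ring

theorem integrable_norm_sub_smul_sq [IsFiniteMeasure P] {D : Ω → E} (hD : MemLp D 2 P)
    (c : E) (a : ℝ) : Integrable (fun ξ => ‖c - a • D ξ‖ ^ 2) P := by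
  have hL2 : MemLp (fun ξ => c - a • D ξ) 2 P := (memLp_const c).sub (hD.const_smul a)
  exact (memLp_two_iff_integrable_sq_norm hL2.aestronglyMeasurable).1 hL2

theorem integral_norm_sub_smul_sq [CompleteSpace E] [IsProbabilityMeasure P] {D : Ω → E}
    (hD : MemLp D 2 P) (hmean : ∫ ξ, D ξ ∂P = 0) (c : E) (a : ℝ) :
    ∫ ξ, ‖c - a • D ξ‖ ^ 2 ∂P = ‖c‖ ^ 2 + a ^ 2 * ∫ ξ, ‖D ξ‖ ^ 2 ∂P := by
  have hD1 : Integrable D P := hD.integrable one_le_two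
  have hD2 : Integrable (fun ξ => ‖D ξ‖ ^ 2) P :=
    (memLp_two_iff_integrable_sq_norm hD.aestronglyMeasurable).1 hD
  have hinner : Integrable (fun ξ => 2 * a * ⟪c, D ξ⟫) P := (hD1.const_inner c).const_mul _
  have hbias : Integrable (fun ξ => ‖c‖ ^ 2 - 2 * a * ⟪c, D ξ⟫) P :=
    (integrable_const _).sub hinner
  simp_rw [norm_sub_smul_sq_real]
  rw [integral_add hbias (hD2.const_mul _), integral_sub (integrable_const _) hinner,
    integral_const_mul, integral_const_mul, integral_inner hD1, hmean, inner_zero_right]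
  simp

end Expectation

theorem norm_smul_sub_sub_smul_sub_le {E : Type*} [NormedAddCommGroup E] [NormedSpace ℝ E]
    {F : E → E} {ρ : ℝ} (hF : ∀ u v, ‖F u - F v‖ ≤ ρ * ‖u - v‖) {b a : ℝ} (hb : 0 ≤ b)
    (ha : 0 ≤ a) (u v : E) : ‖b • (u - v) - a • (F u - F v)‖ ≤ (b + a * ρ) * ‖u - v‖ :=
  calc ‖b • (u - v) - a • (F u - F v)‖ ≤ b * ‖u - v‖ + a * ‖F u - F v‖ := by
        refine (norm_sub_le _ _).trans_eq ?_
        rw [norm_smul, norm_smul, Real.norm_of_nonneg hb, Real.norm_of_nonneg ha]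
    _ ≤ b * ‖u - v‖ + a * (ρ * ‖u - v‖) := by gcongr; exact hF u v
    _ = (b + a * ρ) * ‖u - v‖ := by ring

theorem proximal_stochastic_gradient_contraction_general
    {E : Type*} [NormedAddCommGroup E] [InnerProductSpace ℝ E] [FiniteDimensional ℝ E]
    {Ω : Type*} [MeasurableSpace Ω] (P : Measure Ω) [IsProbabilityMeasure P]
    (f : E → ℝ) (ρ : ℝ) (hρ : 0 ≤ ρ)
    (hflip : ∀ u v : E, ‖gradient f u - gradient f v‖ ≤ ρ * ‖u - v‖)
    (r : E → EReal) (hrbot : ∀ y, r y ≠ ⊥)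
    (hrconv : ERealConvexOn Set.univ r)
    (G : E → Ω → E)
    (σ : ℝ)
    (hGint : ∀ z : E, r z ≠ ⊤ → Integrable (G z) P)
    (hGunbiased : ∀ z : E, r z ≠ ⊤ → ∫ ξ, G z ξ ∂P = gradient f z)
    (hGvar : ∀ z : E, r z ≠ ⊤ →
      ∫⁻ ξ, ENNReal.ofReal (‖G z ξ - gradient f z‖ ^ 2) ∂P ≤ ENNReal.ofReal (σ ^ 2))
    (ρb : ℝ) (hρb : ρ < ρb)
    (a : ℝ) (ha1 : 0 < a) (ha2 : a * ρb ≤ 1)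
    (x : E) (hxdom : r x ≠ ⊤)
    (xhat : E)
    (hstat : ∀ y : E,
      r xhat + ((⟪ρb • (x - xhat) - gradient f xhat, y - xhat⟫ : ℝ) : EReal) ≤ r y)
    (s : Ω → E)
    (hs : ∀ ξ : Ω, ∀ y : E,
      r (s ξ) + ((1 / (2 * a) * ‖s ξ - (x - a • G x ξ)‖ ^ 2 : ℝ) : EReal)
        ≤ r y + ((1 / (2 * a) * ‖y - (x - a • G x ξ)‖ ^ 2 : ℝ) : EReal)) :
    ∫ ξ, ‖s ξ - xhat‖ ^ 2 ∂P
      ≤ ‖x - xhat‖ ^ 2 + a ^ 2 * σ ^ 2 - a * (ρb - ρ) * ‖x - xhat‖ ^ 2 := by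
  set D : Ω → E := fun ξ => G x ξ - gradient f x
  set c : E := (1 - a * ρb) • (x - xhat) - a • (gradient f x - gradient f xhat)
  have hpointwise (ξ : Ω) : ‖s ξ - xhat‖ ^ 2 ≤ ‖c - a • D ξ‖ ^ 2 := by
    have hprox := hrconv.hasSubgradientAt_of_isProx hrbot ha1 (hs ξ)
    have hstep := hprox.norm_sub_le hstat hrbot (hprox.ne_top hxdom) ha1.le
    have hresidual : s ξ + (x - a • G x ξ - s ξ) - (xhat + a • (ρb • (x - xhat) - gradient f xhat))
        = c - a • D ξ := by
      simp only [c, D]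
      module
    rw [smul_inv_smul₀ ha1.ne', hresidual] at hstep
    exact pow_le_pow_left₀ (norm_nonneg _) hstep 2
  have hDmeas : AEStronglyMeasurable D P :=
    (hGint x hxdom).aestronglyMeasurable.sub aestronglyMeasurable_const
  have hDL2 : MemLp D 2 P := memLp_two_of_lintegral_norm_sq_le hDmeas (hGvar x hxdom)
  have hmean : ∫ ξ, D ξ ∂P = 0 := by
    simp [D, integral_sub (hGint x hxdom) (integrable_const _), hGunbiased x hxdom]
  have hvar : ∫ ξ, ‖D ξ‖ ^ 2 ∂P ≤ σ ^ 2 :=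
    integral_norm_sq_le_of_lintegral_le hDmeas (sq_nonneg σ) (hGvar x hxdom)
  have hc : ‖c‖ ≤ (1 - a * ρb + a * ρ) * ‖x - xhat‖ :=
    norm_smul_sub_sub_smul_sub_le hflip (by linarith) ha1.le x xhat
  have hκ : 0 ≤ 1 - a * ρb + a * ρ ∧ 1 - a * ρb + a * ρ ≤ 1 :=
    ⟨by nlinarith, by nlinarith⟩
  calc ∫ ξ, ‖s ξ - xhat‖ ^ 2 ∂P ≤ ∫ ξ, ‖c - a • D ξ‖ ^ 2 ∂P :=
        integral_mono_of_nonneg (ae_of_all _ fun _ => sq_nonneg _)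
          (integrable_norm_sub_smul_sq hDL2 c a) (ae_of_all _ hpointwise)
    _ = ‖c‖ ^ 2 + a ^ 2 * ∫ ξ, ‖D ξ‖ ^ 2 ∂P := integral_norm_sub_smul_sq hDL2 hmean c a
    _ ≤ ((1 - a * ρb + a * ρ) * ‖x - xhat‖) ^ 2 + a ^ 2 * σ ^ 2 := by
        gcongr
    _ ≤ ‖x - xhat‖ ^ 2 + a ^ 2 * σ ^ 2 - a * (ρb - ρ) * ‖x - xhat‖ ^ 2 := by
        nlinarith [mul_nonneg (mul_nonneg hκ.1 (sub_nonneg.2 hκ.2)) (sq_nonneg ‖x - xhat‖)]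

/-- One step of the proximal stochastic gradient method on `φ = f + r` with `f` `C¹`-smooth
with `ρ`-Lipschitz gradient, `r` proper closed convex, an unbiased stochastic gradient
oracle `G` with variance bound `σ²`, `ρ̄ > ρ`, `α ∈ (0, 1/ρ̄]`, `x̂ = prox_{φ/ρ̄}(x)`, and
`ρ̄(x − x̂) − ∇f(x̂) ∈ ∂r(x̂)`.  The step `x⁺(ξ) = prox_{αr}(x − αG(x,ξ))` satisfies
`E‖x⁺(ξ) − x̂‖² ≤ ‖x − x̂‖² + α²σ² − α(ρ̄ − ρ)‖x − x̂‖²`. -/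
theorem proximal_stochastic_gradient_contraction
    {E : Type*} [NormedAddCommGroup E] [InnerProductSpace ℝ E] [FiniteDimensional ℝ E]
    [MeasurableSpace E] [BorelSpace E]
    {Ω : Type*} [MeasurableSpace Ω] (P : Measure Ω) [IsProbabilityMeasure P]
    (f : E → ℝ) (hf : ContDiff ℝ 1 f) (ρ : ℝ) (hρ : 0 ≤ ρ)
    (hflip : ∀ u v : E, ‖gradient f u - gradient f v‖ ≤ ρ * ‖u - v‖)
    (r : E → EReal) (hrbot : ∀ y, r y ≠ ⊥) (hrproper : ∃ y, r y ≠ ⊤)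
    (hrlsc : LowerSemicontinuous r) (hrconv : ERealConvexOn Set.univ r)
    (G : E → Ω → E) (hGmeas : Measurable fun p : E × Ω => G p.1 p.2)
    (σ : ℝ)
    (hGint : ∀ z : E, r z ≠ ⊤ → Integrable (G z) P)
    (hGunbiased : ∀ z : E, r z ≠ ⊤ → ∫ ξ, G z ξ ∂P = gradient f z)
    (hGvar : ∀ z : E, r z ≠ ⊤ →
      ∫⁻ ξ, ENNReal.ofReal (‖G z ξ - gradient f z‖ ^ 2) ∂P ≤ ENNReal.ofReal (σ ^ 2))
    (ρb : ℝ) (hρb : ρ < ρb)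
    (a : ℝ) (ha1 : 0 < a) (ha2 : a * ρb ≤ 1)
    (x : E) (hxdom : r x ≠ ⊤)
    (xhat : E)
    (hxhatmin : ∀ y : E,
      (f xhat : EReal) + r xhat + ((ρb / 2 * ‖xhat - x‖ ^ 2 : ℝ) : EReal)
        ≤ (f y : EReal) + r y + ((ρb / 2 * ‖y - x‖ ^ 2 : ℝ) : EReal))
    (hstat : ∀ y : E,
      r xhat + ((⟪ρb • (x - xhat) - gradient f xhat, y - xhat⟫ : ℝ) : EReal) ≤ r y)
    (s : Ω → E)
    (hs : ∀ ξ : Ω, ∀ y : E,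
      r (s ξ) + ((1 / (2 * a) * ‖s ξ - (x - a • G x ξ)‖ ^ 2 : ℝ) : EReal)
        ≤ r y + ((1 / (2 * a) * ‖y - (x - a • G x ξ)‖ ^ 2 : ℝ) : EReal)) :
    ∫ ξ, ‖s ξ - xhat‖ ^ 2 ∂P
      ≤ ‖x - xhat‖ ^ 2 + a ^ 2 * σ ^ 2 - a * (ρb - ρ) * ‖x - xhat‖ ^ 2 :=
  proximal_stochastic_gradient_contraction_general P f ρ hρ hflip r hrbot hrconv G σ hGint
    hGunbiased hGvar ρb hρb a ha1 ha2 x hxdom xhat hstat s hs
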